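/- arXiv:1505.06320 — 6 statements merged into one kernel-verified Lean document; each statement's English description precedes it below -/
import Mathlib

section
/- Let T be a pruned tree, let γ be a node of T, and let A be a quasi-difference set of [T], i.e. A ∈ 𝒟([T]). Then γ[T_γ] ∩ A ∈ 𝒟([T]). -/
/-! Basic setup: trees of finite sequences, their branches, the topology on the set of
branches, the Hausdorff difference hierarchy, quasi-difference sets, and infinite
games in extensive form. -/

/-- `T` is a tree over `α`: a set of finite sequences closed under taking prefixes. -/
def IsTree {α : Type*} (T : Set (List α)) : Prop :=
  ∀ ⦃γ δ : List α⦄, γ <+: δ → δ ∈ T → γ ∈ T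

/-- `succ(T, γ)`: the nodes of `T` extending `γ` and of length `|γ| + 1`. -/
def treeSucc {α : Type*} (T : Set (List α)) (γ : List α) : Set (List α) :=
  {δ | δ ∈ T ∧ γ <+: δ ∧ δ.length = γ.length + 1}

/-- `T` is pruned if every node has a successor. -/
def IsPruned {α : Type*} (T : Set (List α)) : Prop :=
  ∀ γ ∈ T, (treeSucc T γ).Nonempty

/-- The finite prefix of length `n` of an infinite sequence `p`. -/
def playPrefix {α : Type*} (p : ℕ → α) (n : ℕ) : List α :=
  List.ofFn fun i : Fin n => p i

/-- `[T]`: the infinite sequences all of whose finite prefixes lie in `T`. -/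
def Body {α : Type*} (T : Set (List α)) : Set (ℕ → α) :=
  {p | ∀ n : ℕ, playPrefix p n ∈ T}

/-- `γ[T_γ]`: the elements of `[T]` extending the node `γ`. -/
def cylinder {α : Type*} (T : Set (List α)) (γ : List α) : Set (ℕ → α) :=
  {p | p ∈ Body T ∧ playPrefix p γ.length = γ}

/-- Open subsets of `[T]`: the unions of basic sets `γ[T_γ]`, `γ ∈ T`. -/
def IsOpenIn {α : Type*} (T : Set (List α)) (A : Set (ℕ → α)) : Prop :=
  ∃ S ⊆ T, A = ⋃ γ ∈ S, cylinder T γ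

/-- Closed subsets of `[T]`: complements in `[T]` of open subsets of `[T]`. -/
def IsClosedIn {α : Type*} (T : Set (List α)) (A : Set (ℕ → α)) : Prop :=
  A ⊆ Body T ∧ IsOpenIn T (Body T \ A)

/-- Borel subsets of `[T]`: members of the σ-algebra generated by the open
subsets of `[T]` that are themselves included in `[T]`. -/
def IsBorelIn {α : Type*} (T : Set (List α)) (X : Set (ℕ → α)) : Prop :=
  X ⊆ Body T ∧
    @MeasurableSet (ℕ → α) (MeasurableSpace.generateFrom {A | IsOpenIn T A}) X

/-- `D_θ((A_η)_{η<θ})`: the set of `x ∈ ⋃_{η<θ} A_η` such that the least `η < θ`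
with `x ∈ A_η` has parity opposite to that of `θ`. -/
noncomputable def Dset {α : Type*} (θ : Ordinal.{0}) (A : Ordinal.{0} → Set (ℕ → α)) :
    Set (ℕ → α) :=
  {x | (∃ η < θ, x ∈ A η) ∧ sInf {η | η < θ ∧ x ∈ A η} % 2 ≠ θ % 2}

/-- `D_θ([T])`: all sets of the form `D_θ((A_η)_{η<θ})` for an `⊆`-increasing family
of open subsets of `[T]`. -/
def Dclass {α : Type*} (T : Set (List α)) (θ : Ordinal.{0}) : Set (Set (ℕ → α)) :=
  {X | ∃ A : Ordinal.{0} → Set (ℕ → α),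
        (∀ η < θ, IsOpenIn T (A η)) ∧
        (∀ η₁ η₂, η₁ ≤ η₂ → η₂ < θ → A η₁ ⊆ A η₂) ∧
        X = Dset θ A}

/-- The quasi-difference sets `𝒟([T])`: open sets, unions of quasi-difference sets
placed below pairwise `⊑`-incomparable nodes, and complements in `[T]`. -/
inductive QuasiDiff {α : Type*} (T : Set (List α)) : Set (ℕ → α) → Prop
  | isOpen : ∀ A, IsOpenIn T A → QuasiDiff T A
  | iUnion : ∀ (S : Set (List α)) (D : List α → Set (ℕ → α)),
      S ⊆ T → (S.Pairwise fun γ δ => ¬ γ <+: δ) →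
      (∀ γ ∈ S, QuasiDiff T (D γ)) →
      (∀ γ ∈ S, D γ ⊆ cylinder T γ) →
      QuasiDiff T (⋃ γ ∈ S, D γ)
  | compl : ∀ A, QuasiDiff T A → QuasiDiff T (Body T \ A)

/-- An infinite game in extensive form: a tree `T` of finite plays, an owner function `d`,
an outcome function `v` on infinite plays, and a preference relation for each player. -/
structure Game (α A O : Type*) where
  T : Set (List α)
  d : List α → A
  v : (ℕ → α) → O
  pref : A → O → O → Prop

/-- The infinite sequence starting with `γ` and continuing with `p`. -/
def listExtend {α : Type*} (γ : List α) (p : ℕ → α) : ℕ → α :=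
  fun n => if h : n < γ.length then γ.get ⟨n, h⟩ else p (n - γ.length)

/-- The subgame `g_γ` of `g` at a node `γ`. -/
def Game.sub {α A O : Type*} (g : Game α A O) (γ : List α) : Game α A O where
  T := {δ | γ ++ δ ∈ g.T}
  d := fun δ => g.d (γ ++ δ)
  v := fun p => g.v (listExtend γ p)
  pref := g.pref

/-- A strategy profile on `T`: it maps each node of `T` to a successor. -/
def IsProfile {α : Type*} (T : Set (List α)) (s : List α → List α) : Prop :=
  ∀ γ ∈ T, s γ ∈ treeSucc T γ

/-- The sequence of nodes obtained from `γ` by repeatedly applying `s`. -/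
def iterNode {α : Type*} (s : List α → List α) (γ : List α) : ℕ → List α
  | 0 => γ
  | n + 1 => s (iterNode s γ n)

/-- The play `p^ε(s)` induced by `s` at the root. -/
def inducedPlay {α : Type*} [Inhabited α] (s : List α → List α) : ℕ → α :=
  fun n => (iterNode s [] (n + 1)).getD n default

/-- The subprofile `s_γ`, defined by `γ s_γ(δ) = s(γδ)`. -/
def subProfile {α : Type*} (γ : List α) (s : List α → List α) : List α → List α :=
  fun δ => (s (γ ++ δ)).drop γ.length

/-- `s` is a Nash equilibrium of `g`: no player `a` has a profitable deviation `s'`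
differing from `s` only at nodes owned by `a`. -/
def IsNE {α A O : Type*} [Inhabited α] (g : Game α A O) (s : List α → List α) : Prop :=
  ¬ ∃ (a : A) (s' : List α → List α), IsProfile g.T s' ∧
      (∀ γ ∈ g.T, s γ ≠ s' γ → g.d γ = a) ∧
      g.pref a (g.v (inducedPlay s)) (g.v (inducedPlay s'))

/-- `s` is a subgame perfect equilibrium of `g`: `s_γ` is an NE of `g_γ` for all `γ ∈ T`. -/
def IsSPE {α A O : Type*} [Inhabited α] (g : Game α A O) (s : List α → List α) : Prop :=
  ∀ γ ∈ g.T, IsNE (g.sub γ) (subProfile γ s)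

/-- The outcomes occurring in `g`. -/
def OutcomesOf {α A O : Type*} (g : Game α A O) : Set O := g.v '' Body g.T

/-- `x ∈ Os` is Pareto-optimal in `Os`. -/
def ParetoOpt {A O : Type*} (pref : A → O → O → Prop) (Os : Set O) (x : O) : Prop :=
  x ∈ Os ∧ ∀ y ∈ Os, ∀ a, pref a x y → ∃ b, pref b y x

/-- The outcome induced by the subprofile `s_γ` in the subgame `g_γ`. -/
def subOutcome {α A O : Type*} [Inhabited α] (g : Game α A O) (s : List α → List α)
    (γ : List α) : O :=
  (g.sub γ).v (inducedPlay (subProfile γ s))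

/-- Global-Pareto SPE: an SPE inducing in every subgame an outcome that is
Pareto-optimal among the outcomes occurring in that subgame. -/
def IsGPSPE {α A O : Type*} [Inhabited α] (g : Game α A O) (s : List α → List α) : Prop :=
  IsSPE g s ∧ ∀ γ ∈ g.T, ParetoOpt g.pref (OutcomesOf (g.sub γ)) (subOutcome g s γ)

/-- An `x`-pseudo-leaf: a shortest node `γ ∈ T` such that only `x` occurs in `g_γ`. -/
def IsPseudoLeaf {α A O : Type*} (g : Game α A O) (x : O) (γ : List α) : Prop :=
  γ ∈ g.T ∧ OutcomesOf (g.sub γ) = {x} ∧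
    ∀ δ, δ <+: γ → δ ≠ γ → OutcomesOf (g.sub δ) ≠ {x}

/-- A strict weak order: irreflexive, transitive, with transitive complement. -/
def IsSWO {O : Type*} (r : O → O → Prop) : Prop :=
  (∀ x, ¬ r x x) ∧ (∀ x y z, r x y → r y z → r x z) ∧
  (∀ x y z, ¬ r x y → ¬ r y z → ¬ r x z)

/-- The SPE killer does not occur in the family of preferences `lt`. -/
def NoSPEKiller {A O : Type*} (lt : A → O → O → Prop) : Prop :=
  ∀ a b : A, ∀ x y z : O, ¬ (lt a z y ∧ lt a y x ∧ lt b x z ∧ lt b z y)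

lemma playPrefix_length {α : Type*} (p : ℕ → α) (n : ℕ) : (playPrefix p n).length = n := by
  simp [playPrefix]

lemma playPrefix_take {α : Type*} (p : ℕ → α) {m n : ℕ} (h : m ≤ n) :
    (playPrefix p n).take m = playPrefix p m := by
  apply List.ext_getElem
  · simp [playPrefix, h]
  · intro i h1 h2
    simp [playPrefix]

lemma cyl_mono {α : Type*} {T : Set (List α)} {γ δ : List α} (h : γ <+: δ) :
    cylinder T δ ⊆ cylinder T γ := by
  rintro p ⟨hb, hp⟩
  refine ⟨hb, ?_⟩
  have := playPrefix_take p h.length_le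
  rw [hp] at this
  rw [← this]
  exact (List.prefix_iff_eq_take.mp h).symm

lemma cyl_comparable {α : Type*} {T : Set (List α)} {γ δ : List α} {p : ℕ → α}
    (hγ : p ∈ cylinder T γ) (hδ : p ∈ cylinder T δ) : γ <+: δ ∨ δ <+: γ := by
  rcases le_total γ.length δ.length with h | h
  · left
    have := playPrefix_take p h
    rw [hγ.2, hδ.2] at this
    rw [← this]
    exact List.take_prefix _ _
  · right
    have := playPrefix_take p h
    rw [hγ.2, hδ.2] at this
    rw [← this]
    exact List.take_prefix _ _

lemma isOpenIn_cylinder {α : Type*} {T : Set (List α)} {γ : List α} (hγ : γ ∈ T) :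
    IsOpenIn T (cylinder T γ) :=
  ⟨{γ}, by simpa using hγ, by simp⟩

/-- quasi-difference sets are closed under intersection with basic sets. -/
theorem stmt1 {α : Type*} (T : Set (List α)) (hT : IsTree T) (hpr : IsPruned T)
    (γ : List α) (hγ : γ ∈ T) (A : Set (ℕ → α)) (hA : QuasiDiff T A) :
    QuasiDiff T (cylinder T γ ∩ A) := by
  classical
  induction hA with
  | isOpen A hA =>
    obtain ⟨S, hS, rfl⟩ := hA
    apply QuasiDiff.isOpen
    refine ⟨{δ ∈ S | γ <+: δ} ∪ {ε | ε = γ ∧ ∃ δ ∈ S, δ <+: γ}, ?_, ?_⟩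
    · rintro ε (⟨hε, -⟩ | ⟨rfl, -⟩)
      · exact hS hε
      · exact hγ
    · ext p
      simp only [Set.mem_inter_iff, Set.mem_iUnion, Set.mem_union, Set.mem_setOf_eq,
        exists_prop]
      constructor
      · rintro ⟨hpγ, δ, hδS, hpδ⟩
        rcases cyl_comparable hpγ hpδ with h | h
        · exact ⟨δ, Or.inl ⟨hδS, h⟩, hpδ⟩
        · exact ⟨γ, Or.inr ⟨rfl, δ, hδS, h⟩, hpγ⟩
      · rintro ⟨δ, hδ, hpδ⟩
        rcases hδ with ⟨hδS, hpre⟩ | ⟨rfl, δ', hδ'S, hpre⟩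
        · exact ⟨cyl_mono hpre hpδ, δ, hδS, hpδ⟩
        · exact ⟨hpδ, δ', hδ'S, cyl_mono hpre hpδ⟩
  | iUnion S D hS hpair hQ hsub ih =>
    have : cylinder T γ ∩ ⋃ δ ∈ S, D δ = ⋃ δ ∈ S, (cylinder T γ ∩ D δ) := by
      ext p; simp only [Set.mem_inter_iff, Set.mem_iUnion, exists_prop]; tauto
    rw [this]
    exact QuasiDiff.iUnion S (fun δ => cylinder T γ ∩ D δ) hS hpair ih
      (fun δ hδ => Set.inter_subset_right.trans (hsub δ hδ))
  | compl A hA ih =>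
    have key : cylinder T γ ∩ (Body T \ A) =
        Body T \ ⋃ δ ∈ {δ ∈ T | δ.length = γ.length},
          (fun δ => if δ = γ then cylinder T γ ∩ A else cylinder T δ) δ := by
      ext p
      simp only [Set.mem_inter_iff, Set.mem_diff, Set.mem_iUnion, Set.mem_setOf_eq,
        exists_prop, not_exists, not_and]
      constructor
      · rintro ⟨hpγ, hb, hpA⟩
        refine ⟨hb, fun δ ⟨hδT, hδl⟩ => ?_⟩
        by_cases h : δ = γ
        · subst h; simp only [if_pos rfl]
          exact fun hc => hpA hc.2
        · simp only [if_neg h]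
          rintro ⟨-, hpδ⟩
          apply h
          rw [← hpδ, hδl, hpγ.2]
      · rintro ⟨hb, hall⟩
        have hδ0T : playPrefix p γ.length ∈ T := hb γ.length
        have hδ0 : playPrefix p γ.length = γ := by
          by_contra hne
          exact hall _ ⟨hδ0T, playPrefix_length p _⟩
            (by simp only [if_neg hne]; exact ⟨hb, by rw [playPrefix_length]⟩)
        have hpγ : p ∈ cylinder T γ := ⟨hb, hδ0⟩
        refine ⟨hpγ, hb, fun hpA => ?_⟩
        exact hall γ ⟨hγ, rfl⟩ (by simp only [if_pos rfl]; exact ⟨hpγ, hpA⟩)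
    rw [key]
    apply QuasiDiff.compl
    apply QuasiDiff.iUnion
    · rintro δ ⟨hδT, -⟩; exact hδT
    · rintro δ ⟨-, hδl⟩ ε ⟨-, hεl⟩ hne h
      exact hne (h.eq_of_length (by rw [hδl, hεl]))
    · rintro δ ⟨hδT, -⟩
      by_cases h : δ = γ
      · subst h; simpa using ih
      · simp only [if_neg h]
        exact QuasiDiff.isOpen _ (isOpenIn_cylinder hδT)
    · rintro δ ⟨hδT, -⟩
      by_cases h : δ = γ
      · subst h; simp only [if_pos rfl]; exact Set.inter_subset_left
      · simp only [if_neg h]; exact le_refl _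
end

section
/- Let T be a nonempty pruned tree, let q be a quasi profile on T, and let (γ_i)_{i∈I} be the family of all nodes γ_i ∈ T such that γ_i ∉ q(γ) for every γ ∈ T. Then the family {γ_i T_{γ_i}(q)}_{i∈I} (where γ_i T_{γ_i}(q) = {γ_i δ : δ ∈ T_{γ_i}(q)}) is a partition of T. -/
/-- A quasi profile on `T`: `∅ ≠ q(γ) ⊆ succ(T,γ)` for all `γ ∈ T`. -/
def QuasiProfile {α : Type*} (T : Set (List α)) (q : List α → Set (List α)) : Prop :=
  ∀ γ ∈ T, (q γ).Nonempty ∧ q γ ⊆ treeSucc T γ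

/-- The tree `T_γ(q)` induced by a quasi profile `q` starting at `γ`: the least set
containing the empty sequence, and containing `q_γ(δ)` as soon as it contains `δ`
(where `γ q_γ(δ) = q(γδ)`). -/
inductive InducedSubtree {α : Type*} (q : List α → Set (List α)) (γ : List α) :
    List α → Prop
  | nil : InducedSubtree q γ []
  | step : ∀ δ δ', InducedSubtree q γ δ → γ ++ δ' ∈ q (γ ++ δ) → InducedSubtree q γ δ'

/-- The nodes of `T` not chosen by `q` anywhere. -/
def qRoots {α : Type*} (T : Set (List α)) (q : List α → Set (List α)) : Set (List α) :=
  {γ | γ ∈ T ∧ ∀ δ ∈ T, γ ∉ q δ}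

/-- `γ T_γ(q) = {γδ : δ ∈ T_γ(q)}`. -/
def qBlock {α : Type*} (q : List α → Set (List α)) (γ : List α) : Set (List α) :=
  {β | ∃ δ, InducedSubtree q γ δ ∧ β = γ ++ δ}


lemma induced_mem {α : Type*} {T : Set (List α)} {q : List α → Set (List α)}
    (hq : QuasiProfile T q) {γ : List α} (hγ : γ ∈ T) {δ : List α}
    (h : InducedSubtree q γ δ) : γ ++ δ ∈ T := by
  induction h with
  | nil => simpa using hγ
  | step δ δ' h hmem ih => exact ((hq _ ih).2 hmem).1

lemma root_eq_of_nil {α : Type*} {T : Set (List α)} {q : List α → Set (List α)}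
    (hq : QuasiProfile T q) {γ₁ γ₂ : List α}
    (h₁ : γ₁ ∈ qRoots T q) (h₂ : γ₂ ∈ qRoots T q) {δ : List α}
    (hs : InducedSubtree q γ₂ δ) (heq : γ₁ = γ₂ ++ δ) : γ₁ = γ₂ := by
  cases hs with
  | nil => simpa using heq
  | step δp δ' hs' hmem =>
    exact absurd (heq ▸ hmem) (h₁.2 (γ₂ ++ δp) (induced_mem hq h₂.1 hs'))

lemma root_unique {α : Type*} {T : Set (List α)} {q : List α → Set (List α)}
    (hq : QuasiProfile T q) :
    ∀ n (β : List α), β.length ≤ n → ∀ γ₁ γ₂, γ₁ ∈ qRoots T q → γ₂ ∈ qRoots T q →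
      β ∈ qBlock q γ₁ → β ∈ qBlock q γ₂ → γ₁ = γ₂ := by
  intro n
  induction n with
  | zero =>
    rintro β hβ γ₁ γ₂ h₁ h₂ ⟨δ₁, hs₁, he₁⟩ ⟨δ₂, hs₂, he₂⟩
    have hb : β = [] := List.length_eq_zero_iff.mp (Nat.le_zero.mp hβ)
    subst hb
    have e₁ := (List.append_eq_nil_iff.mp he₁.symm).1
    have e₂ := (List.append_eq_nil_iff.mp he₂.symm).1
    rw [e₁, e₂]
  | succ n ih =>
    rintro β hβ γ₁ γ₂ h₁ h₂ ⟨δ₁, hs₁, he₁⟩ ⟨δ₂, hs₂, he₂⟩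
    cases hs₁ with
    | nil =>
      simp only [List.append_nil] at he₁
      exact root_eq_of_nil hq h₁ h₂ hs₂ (he₁ ▸ he₂)
    | step δ₁p δ₁' hs₁' hm₁ =>
      cases hs₂ with
      | nil =>
        simp only [List.append_nil] at he₂
        exact (root_eq_of_nil hq h₂ h₁ (InducedSubtree.step δ₁p δ₁ hs₁' hm₁)
          (he₂ ▸ he₁)).symm
      | step δ₂p δ₂' hs₂' hm₂ =>
        have hT₁ : γ₁ ++ δ₁p ∈ T := induced_mem hq h₁.1 hs₁'
        have hT₂ : γ₂ ++ δ₂p ∈ T := induced_mem hq h₂.1 hs₂'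
        have hsucc₁ := (hq _ hT₁).2 hm₁
        have hsucc₂ := (hq _ hT₂).2 hm₂
        rw [← he₁] at hsucc₁
        rw [← he₂] at hsucc₂
        have hpre₁ := hsucc₁.2.1
        have hpre₂ := hsucc₂.2.1
        have hlen : (γ₁ ++ δ₁p).length = (γ₂ ++ δ₂p).length := by
          have := hsucc₁.2.2; have := hsucc₂.2.2; omega
        have heq : γ₁ ++ δ₁p = γ₂ ++ δ₂p := by
          rw [List.prefix_iff_eq_take.mp hpre₁, List.prefix_iff_eq_take.mp hpre₂, hlen]
        have hlen' : (γ₁ ++ δ₁p).length ≤ n := by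
          have := hsucc₁.2.2; omega
        exact ih (γ₁ ++ δ₁p) hlen' γ₁ γ₂ h₁ h₂ ⟨δ₁p, hs₁', rfl⟩
          ⟨δ₂p, hs₂', heq⟩

lemma exists_root {α : Type*} {T : Set (List α)} {q : List α → Set (List α)}
    (hq : QuasiProfile T q) :
    ∀ n (β : List α), β.length ≤ n → β ∈ T → ∃ γ ∈ qRoots T q, β ∈ qBlock q γ := by
  intro n
  induction n with
  | zero =>
    intro β hβ hβT
    by_cases hr : ∀ δ ∈ T, β ∉ q δ
    · exact ⟨β, ⟨hβT, hr⟩, [], InducedSubtree.nil, by simp⟩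
    · push_neg at hr
      obtain ⟨δ, hδT, hmem⟩ := hr
      have := ((hq δ hδT).2 hmem).2.2
      omega
  | succ n ih =>
    intro β hβ hβT
    by_cases hr : ∀ δ ∈ T, β ∉ q δ
    · exact ⟨β, ⟨hβT, hr⟩, [], InducedSubtree.nil, by simp⟩
    · push_neg at hr
      obtain ⟨δ, hδT, hmem⟩ := hr
      have hsucc := (hq δ hδT).2 hmem
      have hδlen : δ.length ≤ n := by have := hsucc.2.2; omega
      obtain ⟨γ, hγ, δ₀, hs₀, he₀⟩ := ih δ hδlen hδT
      obtain ⟨t, ht⟩ := hsucc.2.1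
      refine ⟨γ, hγ, δ₀ ++ t, InducedSubtree.step δ₀ (δ₀ ++ t) hs₀ ?_, ?_⟩
      · rw [← List.append_assoc, ← he₀, ht]; exact hmem
      · rw [← List.append_assoc, ← he₀, ht]

/-- `{γᵢ T_{γᵢ}(q)}_{i ∈ I}` is a partition of `T`, where the `γᵢ` are the
nodes of `T` not chosen by `q` anywhere. -/
theorem stmt4 {α : Type*} (T : Set (List α)) (hT : IsTree T) (hne : T.Nonempty)
    (hpr : IsPruned T) (q : List α → Set (List α)) (hq : QuasiProfile T q) :
    (∀ γ ∈ qRoots T q, (qBlock q γ).Nonempty) ∧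
    (⋃ γ ∈ qRoots T q, qBlock q γ) = T ∧
    (qRoots T q).PairwiseDisjoint (qBlock q) := by
  refine ⟨fun γ hγ => ⟨γ, [], InducedSubtree.nil, by simp⟩, ?_, ?_⟩
  · ext β
    simp only [Set.mem_iUnion]
    constructor
    · rintro ⟨γ, hγ, δ, hs, rfl⟩
      exact induced_mem hq hγ.1 hs
    · intro hβ
      obtain ⟨γ, hγ, hb⟩ := exists_root hq β.length β le_rfl hβ
      exact ⟨γ, hγ, hb⟩
  · intro γ₁ h₁ γ₂ h₂ hne'
    rw [Function.onFun, Set.disjoint_left]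
    intro β hb₁ hb₂
    exact hne' (root_unique hq β.length β le_rfl γ₁ γ₂ h₁ h₂ hb₁ hb₂)
end

section
/- Let A be a nonempty set and for each a ∈ A let <_a be a strict linear order on a nonempty set O. The following are equivalent: (1) for all a,b ∈ A and all x,y,z ∈ O, ¬(z <_a y <_a x ∧ x <_b z <_b y); (2) there exist a partition {O_i}_{i∈I} of O and a strict linear order < on I such that (a) i < j implies x <_a y for all a ∈ A, x ∈ O_i and y ∈ O_j, and (b) for all a,b ∈ A and i ∈ I, the restriction of <_b to O_i equals the restriction of <_a to O_i or equals its inverse. Moreover, when (1) and (2) hold, the partition can be chosen so that for every i ∈ I with |O_i| > 1 there exist a,b ∈ A with <_b restricted to O_i equal to the inverse of <_a restricted to O_i. -/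
/-- A partition `P` of the outcomes together with a strict linear order `r` on its blocks,
such that blocks are ordered uniformly by every player's preference, and on each block
all preferences agree or are inverse of one another. -/
def LayeredPartition {A O : Type*} (lt : A → O → O → Prop)
    (P : Set (Set O)) (r : Set O → Set O → Prop) : Prop :=
  Setoid.IsPartition P ∧
  (∀ B ∈ P, ¬ r B B) ∧
  (∀ B ∈ P, ∀ C ∈ P, ∀ D ∈ P, r B C → r C D → r B D) ∧
  (∀ B ∈ P, ∀ C ∈ P, B ≠ C → r B C ∨ r C B) ∧
  (∀ B ∈ P, ∀ C ∈ P, r B C → ∀ a : A, ∀ x ∈ B, ∀ y ∈ C, lt a x y) ∧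
  (∀ a b : A, ∀ B ∈ P,
    (∀ x ∈ B, ∀ y ∈ B, (lt b x y ↔ lt a x y)) ∨
    (∀ x ∈ B, ∀ y ∈ B, (lt b x y ↔ lt a y x)))

/-!
Call `x` and `y` disputed when two players order them differently. Without the SPE killer,
"equal or disputed" is an equivalence relation, whose classes are the blocks: if `x, y` and
`y, z` are disputed while all players rank `x` below `z`, the witnesses of the two disputes form
a killer. Elements of different blocks are ordered alike by all players, independently of the
chosen representatives, which orders the blocks. Inside a block, two players who disagree on one
pair `u, v` disagree on every pair `u, w`: if they agreed on `u, w`, a player ranking `u, w` the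
other way would form a killer with one of them on `{u, v, w}`.
-/

theorem rel_or_rel_of_ne {α : Type*} {r : α → α → Prop} [Std.Trichotomous r] {x y : α}
    (h : x ≠ y) : r x y ∨ r y x :=
  (trichotomous_of r x y).imp_right (Or.resolve_left · h)

section Preferences

variable {A O : Type*} {lt : A → O → O → Prop}

theorem NoSPEKiller.dual (hK : NoSPEKiller lt) : NoSPEKiller fun a x y => lt a y x :=
  fun a b x y z ⟨h₁, h₂, h₃, h₄⟩ => hK b a x z y ⟨h₄, h₃, h₂, h₁⟩

def Disputed (lt : A → O → O → Prop) (x y : O) : Prop := ∃ a b, lt a x y ∧ lt b y x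

theorem Disputed.symm {x y : O} (h : Disputed lt x y) : Disputed lt y x :=
  let ⟨a, b, hab, hba⟩ := h
  ⟨b, a, hba, hab⟩

def Reversed (lt : A → O → O → Prop) (a b : A) (x y : O) : Prop := lt b x y ↔ lt a y x

def UniformlyBelow (lt : A → O → O → Prop) (B C : Set O) : Prop :=
  ∀ a, ∀ x ∈ B, ∀ y ∈ C, lt a x y

section StrictTotalOrder

variable [∀ a, IsStrictTotalOrder O (lt a)] {a b c : A} {x y z u v w : O}

theorem UniformlyBelow.trans {B C D : Set O} (hBC : UniformlyBelow lt B C) (hC : C.Nonempty)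
    (hCD : UniformlyBelow lt C D) : UniformlyBelow lt B D :=
  fun a x hx _ hw => let ⟨y, hy⟩ := hC; _root_.trans (hBC a x hx y hy) (hCD a y hy _ hw)

theorem lt_of_not_disputed (h : ¬ Disputed lt x y) (ha : lt a x y) (b : A) : lt b x y :=
  (rel_or_rel_of_ne (ne_of_irrefl ha)).resolve_right fun hb => h ⟨a, b, ha, hb⟩

theorem Reversed.rfl : Reversed lt a b x x := iff_of_false (irrefl x) (irrefl x)

theorem Reversed.symm (h : Reversed lt a b x y) : Reversed lt a b y x := by
  rcases eq_or_ne x y with rfl | hxy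
  · exact h
  constructor
  · exact fun hb => (rel_or_rel_of_ne hxy).resolve_right fun ha => asymm hb (h.2 ha)
  · exact fun ha => (rel_or_rel_of_ne hxy.symm).resolve_right fun hb => asymm ha (h.1 hb)

theorem Reversed.swap (h : Reversed lt a b x y) : Reversed lt b a x y :=
  Iff.symm (Reversed.symm h)

theorem agree_or_exists_opposed (B : Set O) (a b : A) :
    (∀ x ∈ B, ∀ y ∈ B, lt b x y ↔ lt a x y) ∨ ∃ x ∈ B, ∃ y ∈ B, lt a x y ∧ lt b y x := by
  refine or_iff_not_imp_right.2 fun h x hx y hy => ⟨fun hb => ?_, fun ha => ?_⟩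
  · exact (rel_or_rel_of_ne (ne_of_irrefl hb)).resolve_right fun ha => h ⟨y, hy, x, hx, ha, hb⟩
  · exact (rel_or_rel_of_ne (ne_of_irrefl ha)).resolve_right fun hb => h ⟨x, hx, y, hy, ha, hb⟩

namespace NoSPEKiller

variable (hK : NoSPEKiller lt)
include hK

theorem lt_of_opposed_of_lt_of_lt (hauv : lt a u v) (hbvu : lt b v u) (hauw : lt a u w)
    (hbuw : lt b u w) (c : A) : lt c u w := by
  by_contra hcuw
  have hcwu : lt c w u := (rel_or_rel_of_ne (ne_of_irrefl hauw)).resolve_left hcuw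
  rcases eq_or_ne v w with rfl | hvw
  · exact asymm hbvu hbuw
  rcases rel_or_rel_of_ne hvw (r := lt a) with havw | hawv
  · rcases rel_or_rel_of_ne (ne_of_irrefl hauv) (r := lt c) with hcuv | hcvu
    · exact hK a c w v u ⟨hauv, havw, hcwu, hcuv⟩
    rcases rel_or_rel_of_ne hvw (r := lt c) with hcvw | hcwv
    · exact hK c a u w v ⟨hcvw, hcwu, hauv, havw⟩
    · exact hK b c w u v ⟨hbvu, hbuw, hcwv, hcvu⟩
  · exact hK a b v w u ⟨hauw, hawv, hbvu, hbuw⟩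

theorem gt_of_opposed_of_gt_of_gt (hauv : lt a u v) (hbvu : lt b v u) (hawu : lt a w u)
    (hbwu : lt b w u) (c : A) : lt c w u :=
  hK.dual.lt_of_opposed_of_lt_of_lt hbvu hauv hbwu hawu c

theorem disputed_trans (hxy : Disputed lt x y) (hyz : Disputed lt y z) (hxz : x ≠ z) :
    Disputed lt x z := by
  by_contra hnd
  obtain ⟨a, b, haxy, hbyx⟩ := hxy
  obtain ⟨c, d, hcyz, hdzy⟩ := hyz
  rcases rel_or_rel_of_ne hxz (r := lt a) with haxz | hazx
  · have hxz := lt_of_not_disputed hnd haxz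
    exact hK d b y z x ⟨hxz d, hdzy, hbyx, hxz b⟩
  · have hzx := lt_of_not_disputed (fun h => hnd h.symm) hazx
    exact hK a c y x z ⟨hzx a, haxy, hcyz, hzx c⟩

def disputeSetoid : Setoid O where
  r x y := x = y ∨ Disputed lt x y
  iseqv.refl _ := .inl rfl
  iseqv.symm := by
    rintro x y (rfl | h)
    exacts [.inl rfl, .inr h.symm]
  iseqv.trans := by
    rintro x y z (rfl | hxy) hyz
    · exact hyz
    rcases hyz with rfl | hyz
    · exact .inr hxy
    · exact (eq_or_ne x z).imp_right (hK.disputed_trans hxy hyz)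

theorem reversed_of_rel (hauv : lt a u v) (hbvu : lt b v u) (huw : hK.disputeSetoid u w) :
    Reversed lt a b u w := by
  obtain rfl | ⟨p, q, hpuw, hqwu⟩ := huw
  · exact Reversed.rfl
  rcases rel_or_rel_of_ne (ne_of_irrefl hpuw) (r := lt a) with hauw | hawu
  · refine iff_of_false (fun hbuw => ?_) (asymm hauw)
    exact asymm hqwu (hK.lt_of_opposed_of_lt_of_lt hauv hbvu hauw hbuw q)
  · refine iff_of_true ((rel_or_rel_of_ne (ne_of_irrefl hpuw)).resolve_right fun hbwu => ?_) hawu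
    exact asymm hpuw (hK.gt_of_opposed_of_gt_of_gt hauv hbvu hawu hbwu p)

theorem reversed_of_mem_classes {B : Set O} (hB : B ∈ hK.disputeSetoid.classes) (hx : x ∈ B)
    (hab : lt a x y) (hba : lt b y x) : ∀ u ∈ B, ∀ v ∈ B, Reversed lt a b u v := by
  have hrel {p q : O} (hp : p ∈ B) (hq : q ∈ B) : hK.disputeSetoid p q :=
    (Setoid.rel_iff_exists_classes _).2 ⟨B, hB, hp, hq⟩
  have hxw (w : O) (hw : w ∈ B) : Reversed lt a b x w := hK.reversed_of_rel hab hba (hrel hx hw)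
  intro u hu v hv
  rcases trichotomous_of (lt a) x u with haxu | rfl | haux
  · exact (hK.reversed_of_rel ((hxw u hu).symm.2 haxu) haxu (hrel hu hv)).swap
  · exact hxw v hv
  · exact hK.reversed_of_rel haux ((hxw u hu).2 haux) (hrel hu hv)

theorem lt_of_rel_of_not_rel {x x' y : O} (hxx' : hK.disputeSetoid x x')
    (hxy : ¬ hK.disputeSetoid x y) (ha : lt a x y) (b : A) : lt b x' y := by
  have hx'y : ¬ Disputed lt x' y := fun h => hxy (hK.disputeSetoid.trans' hxx' (.inr h))
  obtain rfl | ⟨-, d, -, hdx'x⟩ := hxx'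
  · exact lt_of_not_disputed hx'y ha b
  · have hdxy := lt_of_not_disputed (fun h => hxy (.inr h)) ha d
    exact lt_of_not_disputed hx'y (_root_.trans hdx'x hdxy) b

theorem lt_of_rel_of_rel {x x' y y' : O} (hxy : ¬ hK.disputeSetoid x y)
    (hxx' : hK.disputeSetoid x x') (hyy' : hK.disputeSetoid y y') (ha : lt a x y) (b : A) :
    lt b x' y' := by
  set s := hK.disputeSetoid
  have hx'y' : ¬ s x' y' := fun h => hxy (s.trans' (s.trans' hxx' h) (s.symm' hyy'))
  have hx'y := hK.lt_of_rel_of_not_rel hxx' hxy ha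
  have hne : x' ≠ y' := by rintro rfl; exact hx'y' (s.refl' x')
  refine (rel_or_rel_of_ne hne).resolve_right fun hb => ?_
  exact asymm (hx'y b) (hK.lt_of_rel_of_not_rel (s.symm' hyy') (fun h => hx'y' (s.symm' h)) hb b)

theorem uniformlyBelow_or_uniformlyBelow [Nonempty A] {B C : Set O}
    (hB : B ∈ hK.disputeSetoid.classes) (hC : C ∈ hK.disputeSetoid.classes) (hBC : B ≠ C) :
    UniformlyBelow lt B C ∨ UniformlyBelow lt C B := by
  set s := hK.disputeSetoid
  obtain ⟨t, rfl⟩ := hB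
  obtain ⟨t', rfl⟩ := hC
  have htt' : ¬ s t t' := fun h =>
    hBC (Setoid.eq_of_mem_classes (s.mem_classes t) (s.refl' t) (s.mem_classes t') h)
  have hne : t ≠ t' := by rintro rfl; exact htt' (s.refl' t)
  rcases rel_or_rel_of_ne hne (r := lt (Classical.arbitrary A)) with h | h
  · exact .inl fun b x hx y hy => hK.lt_of_rel_of_rel htt' (s.symm' hx) (s.symm' hy) h b
  · exact .inr fun b x hx y hy =>
      hK.lt_of_rel_of_rel (fun h' => htt' (s.symm' h')) (s.symm' hx) (s.symm' hy) h b

theorem layeredPartition [Nonempty A] :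
    LayeredPartition lt hK.disputeSetoid.classes (UniformlyBelow lt) := by
  refine ⟨Setoid.isPartition_classes _, ?_, ?_, fun B hB C hC =>
    hK.uniformlyBelow_or_uniformlyBelow hB hC, fun _ _ _ _ h => h, ?_⟩
  · rintro _ ⟨t, rfl⟩ h
    have ht := hK.disputeSetoid.refl' t
    exact irrefl t (h (Classical.arbitrary A) t ht t ht)
  · rintro B - C ⟨t, rfl⟩ D - hBC hCD
    exact hBC.trans ⟨t, hK.disputeSetoid.refl' t⟩ hCD
  · intro a b B hB
    exact (agree_or_exists_opposed B a b).imp_right fun ⟨x, hx, y, hy, ha, hb⟩ =>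
      hK.reversed_of_mem_classes hB hx ha hb

end NoSPEKiller

theorem LayeredPartition.mem_of_lt_of_gt {P : Set (Set O)} {r : Set O → Set O → Prop}
    (h : LayeredPartition lt P r) {B : Set O} (hB : B ∈ P) (hx : x ∈ B) (ha : lt a x y)
    (hb : lt b y x) : y ∈ B := by
  obtain ⟨hpart, -, -, htot, hord, -⟩ := h
  obtain ⟨C, ⟨hC, hy⟩, -⟩ := hpart.2 y
  by_contra hyB
  rcases htot B hB C hC fun h => hyB (h ▸ hy) with h | h
  · exact asymm hb (hord B hB C hC h b x hx y hy)
  · exact asymm ha (hord C hC B hB h a y hy x hx)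

theorem LayeredPartition.noSPEKiller {P : Set (Set O)} {r : Set O → Set O → Prop}
    (h : LayeredPartition lt P r) : NoSPEKiller lt := by
  rintro a b x y z ⟨hazy, hayx, hbxz, hbzy⟩
  obtain ⟨B, ⟨hB, hx⟩, -⟩ := h.1.2 x
  have hz : z ∈ B := h.mem_of_lt_of_gt hB hx hbxz (_root_.trans hazy hayx)
  have hy : y ∈ B := h.mem_of_lt_of_gt hB hx (_root_.trans hbxz hbzy) hayx
  rcases h.2.2.2.2.2 a b B hB with hsame | hrev
  · exact asymm hbxz ((hsame z hz x hx).2 (_root_.trans hazy hayx))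
  · exact asymm hazy ((hrev z hz y hy).1 hbzy)

end StrictTotalOrder

end Preferences

theorem stmt8_general {A O : Type*} [Nonempty A] (lt : A → O → O → Prop)
    (hlin : ∀ a, IsStrictTotalOrder O (lt a)) :
    (NoSPEKiller lt ↔ ∃ P r, LayeredPartition lt P r) ∧
    (NoSPEKiller lt → ∃ P r, LayeredPartition lt P r ∧
      ∀ B ∈ P, (∃ x ∈ B, ∃ y ∈ B, x ≠ y) →
        ∃ a b : A, ∀ x ∈ B, ∀ y ∈ B, (lt b x y ↔ lt a y x)) := by
  have layered (hK : NoSPEKiller lt) : ∃ P r, LayeredPartition lt P r ∧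
      ∀ B ∈ P, (∃ x ∈ B, ∃ y ∈ B, x ≠ y) →
        ∃ a b : A, ∀ x ∈ B, ∀ y ∈ B, (lt b x y ↔ lt a y x) := by
    refine ⟨_, _, hK.layeredPartition, fun B hB ⟨x, hx, y, hy, hxy⟩ => ?_⟩
    obtain ⟨a, b, hab, hba⟩ :=
      ((Setoid.rel_iff_exists_classes _).2 ⟨B, hB, hx, hy⟩).resolve_left hxy
    exact ⟨a, b, hK.reversed_of_mem_classes hB hx hab hba⟩
  exact ⟨⟨fun hK => (layered hK).imp fun _ ⟨r, hr, _⟩ => ⟨r, hr⟩,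
    fun ⟨_, _, h⟩ => h.noSPEKiller⟩, layered⟩

/-- for strict linear preferences, the absence of the SPE killer is
equivalent to the existence of a layered partition of the outcomes; moreover the
partition can be chosen so that on each non-singleton block an inverse pair of
preferences is witnessed. -/
theorem stmt8 {A O : Type*} [Nonempty A] [Nonempty O] (lt : A → O → O → Prop)
    (hlin : ∀ a, IsStrictTotalOrder O (lt a)) :
    (NoSPEKiller lt ↔ ∃ P r, LayeredPartition lt P r) ∧
    (NoSPEKiller lt → ∃ P r, LayeredPartition lt P r ∧
      ∀ B ∈ P, (∃ x ∈ B, ∃ y ∈ B, x ≠ y) →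
        ∃ a b : A, ∀ x ∈ B, ∀ y ∈ B, (lt b x y ↔ lt a y x)) :=
  stmt8_general lt hlin
end

section
/- Let ≺_a and ≺_b be strict weak orders on a finite set O with ≺_a ∩ ≺_b = ∅. Then there exists a strict linear order < on O extending ≺_a such that ≺_b ⊆ <⁻¹ (i.e. x ≺_b y implies y < x). -/
/-!
Ranking each strict weak order by the number of elements strictly below a point turns it into
the strict order induced by a map to `ℕ`. Compare points lexicographically: first by their
`ra`-rank, then by their `rb`-rank reversed, and break the remaining ties by an injection into
`ℕ`. This is a strict linear order extending `ra`, and it reverses `rb` because, by disjointness,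
`rb x y` forces `x` and `y` to have the same `ra`-rank or `y` to have the larger one.
-/

theorem IsSWO.exists_rank {O : Type*} [Finite O] {r : O → O → Prop} (h : IsSWO r) :
    ∃ f : O → ℕ, ∀ x y, r x y ↔ f x < f y := by
  obtain ⟨hirr, htrans, hntrans⟩ := h
  refine ⟨fun x => {z | r z x}.ncard, fun x y => ⟨fun hxy => ?_, fun hlt => ?_⟩⟩
  · refine Set.ncard_lt_ncard ⟨fun z hz => htrans _ _ _ hz hxy, fun hsub => hirr x (hsub hxy)⟩
      (Set.toFinite _)
  · by_contra hxy
    have hsub : {z | r z y} ⊆ {z | r z x} := fun z hz =>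
      by_contra fun hzx => hntrans _ _ _ hzx hxy hz
    exact (Set.ncard_le_ncard hsub (Set.toFinite _)).not_gt hlt

theorem isStrictTotalOrder_of_injective {O β : Type*} [LinearOrder β] {g : O → β}
    (hg : Function.Injective g) : IsStrictTotalOrder O (fun x y => g x < g y) :=
  letI := LinearOrder.lift' g hg
  inferInstanceAs (IsStrictTotalOrder O (· < ·))

/-- two disjoint strict weak orders on a finite set admit a strict linear
order extending the first and contained in the inverse of the second. -/
theorem stmt14 {O : Type*} [Finite O] (ra rb : O → O → Prop)
    (hra : IsSWO ra) (hrb : IsSWO rb)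
    (hdisj : ∀ x y : O, ¬ (ra x y ∧ rb x y)) :
    ∃ lt : O → O → Prop, IsStrictTotalOrder O lt ∧
      (∀ x y, ra x y → lt x y) ∧ (∀ x y, rb x y → lt y x) := by
  obtain ⟨fa, hfa⟩ := hra.exists_rank
  obtain ⟨fb, hfb⟩ := hrb.exists_rank
  obtain ⟨e, he⟩ := exists_injective_nat O
  let g : O → ℕ ×ₗ ℕᵒᵈ ×ₗ ℕ := fun x => toLex (fa x, toLex (OrderDual.toDual (fb x), e x))
  have hg : Function.Injective g := fun x y hxy =>
    he (congrArg (fun p => (ofLex (ofLex p).2).2) hxy)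
  refine ⟨fun x y => g x < g y, isStrictTotalOrder_of_injective hg,
    fun x y hxy => Prod.Lex.toLex_lt_toLex.2 (.inl ((hfa x y).1 hxy)), fun x y hxy => ?_⟩
  have hfa_le : fa y ≤ fa x := not_lt.1 fun h => hdisj x y ⟨(hfa x y).2 h, hxy⟩
  exact Prod.Lex.toLex_lt_toLex'.2 ⟨hfa_le, fun _ =>
    Prod.Lex.toLex_lt_toLex.2 (.inl (OrderDual.toDual_lt_toDual.2 ((hfb x y).1 hxy)))⟩
end

section
/- Consider three players a, b, c with strict weak order preferences on O = {x, y, z, t} given by z ≺_a y ≺_a x with y ∼_a t (t incomparable to y, so z ≺_a t ≺_a x); t ≺_b z ≺_b y with z ∼_b x (so t ≺_b x ≺_b y); and x ≺_c t ≺_c y with y ∼_c z (so x ≺_c t ≺_c z). Consider the game on the full binary tree T = {0,1}^* in which the node 0^n (the all-continue position) is owned by a if n ≡ 0 (mod 3), by b if n ≡ 1 (mod 3), and by c if n ≡ 2 (mod 3) (the owner of any node not of the form 0^n is irrelevant, say a), and whose outcome function v assigns: v(p) = x if p = 000⋯; otherwise, if the first occurrence of 1 in p is at position n (0-indexed), then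 v(p) = y if n ≡ 0 (mod 3), v(p) = z if n ≡ 1 (mod 3), and v(p) = t if n ≡ 2 (mod 3). This game has no subgame perfect equilibrium. -/
/-- Ranks of the three strict weak order preferences on `O = {x, y, z, t} = {0, 1, 2, 3}`:
player `a = 0`: `z ≺ y ∼ t ≺ x`; player `b = 1`: `t ≺ z ∼ x ≺ y`;
player `c = 2`: `x ≺ t ≺ y ∼ z`. -/
def rank17 : Fin 3 → Fin 4 → ℕ := ![![2, 1, 0, 1], ![1, 2, 1, 0], ![0, 2, 2, 1]]

open scoped Classical Fin.NatCast in
/-- The three-player game on the full binary tree: at the all-continue node `0^n`, the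
owner is `a` if `n ≡ 0`, `b` if `n ≡ 1`, `c` if `n ≡ 2 (mod 3)`; the all-zero play has
outcome `x`, and a play whose first `1` is at position `n` has outcome `y`, `z`, `t`
according to `n mod 3`. Outcomes: `x = 0`, `y = 1`, `z = 2`, `t = 3`. -/
noncomputable def game17 : Game (Fin 2) (Fin 3) (Fin 4) where
  T := Set.univ
  d := fun γ => if ∀ c ∈ γ, c = 0 then (γ.length : Fin 3) else 0
  v := fun p => if h : ∃ n, p n ≠ 0 then ((Nat.find h % 3 + 1 : ℕ) : Fin 4) else 0
  pref := fun i u v => rank17 i u < rank17 i v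

/-!
Along the spine `0, 00, 000, …` a profile amounts to a choice, for each `n`, between continuing
and stopping at `0ⁿ`; the outcome of the subgame at `0ⁿ` is `x` if nobody stops from `n` on,
and otherwise `y`, `z` or `t` according to who stops first. Each player ranks its own stopping
outcome strictly between its worst and best outcomes, so subgame perfection forces two
conditions at every `n`: the owner of `0ⁿ` weakly prefers the outcome of `0ⁿ` to stopping there,
and if it stops there, it does not gain by continuing at all its later nodes.

The first condition, at a node of `c`, rules out that nobody stops from some point on. The
second one rules out any stop by `c` (it would rather let `a` or `b` stop, and if only `c`
stops later on, `b` gets `t`), then any stop by `b` (it would rather let `a` stop, and if only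
`b` stops later on, `a` gets `z`), and finally any stop by `a` (only `a` stops, so `a` would
rather never stop and get `x`).
-/

open scoped Fin.NatCast

section Profiles

variable {α : Type*}

theorem isProfile_univ_iff {t : List α → List α} :
    IsProfile Set.univ t ↔ ∀ γ, ∃ a, t γ = γ ++ [a] := by
  constructor
  · intro h γ
    obtain ⟨-, ⟨u, hu⟩, hlen⟩ := h γ trivial
    obtain ⟨a, rfl⟩ : ∃ a, u = [a] := List.length_eq_one_iff.mp (by simpa [← hu] using hlen)
    exact ⟨a, hu.symm⟩
  · rintro h γ -
    obtain ⟨a, ha⟩ := h γ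
    exact ⟨trivial, ha ▸ List.prefix_append γ [a], by simp [ha]⟩

theorem IsProfile.subProfile_univ {s : List α → List α} (hs : IsProfile Set.univ s)
    (γ : List α) : IsProfile Set.univ (subProfile γ s) := by
  rw [isProfile_univ_iff] at hs ⊢
  intro δ
  obtain ⟨a, ha⟩ := hs (γ ++ δ)
  exact ⟨a, by simp [subProfile, ha]⟩

theorem iterNode_nil_eq_playPrefix [Inhabited α] {t : List α → List α}
    (ht : IsProfile Set.univ t) (k : ℕ) : iterNode t [] k = playPrefix (inducedPlay t) k := by
  induction k with
  | zero => rfl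
  | succ k ih =>
    obtain ⟨a, ha⟩ := isProfile_univ_iff.mp ht (iterNode t [] k)
    have hlen : (iterNode t [] k).length = k := by simp [ih, playPrefix]
    have hk : inducedPlay t k = a := by
      simp [inducedPlay, iterNode, ha, hlen]
    rw [iterNode, ha, ih, playPrefix, playPrefix, List.ofFn_succ_last]
    simp [hk]

end Profiles

theorem listExtend_replicate {α : Type*} (n : ℕ) (a : α) (p : ℕ → α) (k : ℕ) :
    listExtend (List.replicate n a) p k = if k < n then a else p (k - n) := by
  by_cases hk : k < n <;> simp [listExtend, hk]

/-- At the spine node `0ᵏ`, `t` continues (`0`) or stops (`1`). -/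
def spineChoice (t : List (Fin 2) → List (Fin 2)) (k : ℕ) : Fin 2 :=
  (t (List.replicate k 0)).getD k 0

theorem spineChoice_subProfile (s : List (Fin 2) → List (Fin 2)) (n j : ℕ) :
    spineChoice (subProfile (List.replicate n 0) s) j = spineChoice s (n + j) := by
  simp only [spineChoice, subProfile, List.length_replicate, ← List.replicate_append_replicate]
  simp

theorem inducedPlay_eq_spineChoice {t : List (Fin 2) → List (Fin 2)}
    (ht : IsProfile Set.univ t) {k : ℕ} (h : ∀ j < k, inducedPlay t j = 0) :
    inducedPlay t k = spineChoice t k := by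
  have hspine : iterNode t [] k = List.replicate k 0 := by
    rw [iterNode_nil_eq_playPrefix ht, List.eq_replicate_iff]
    simp only [playPrefix, List.length_ofFn, List.mem_ofFn, true_and]
    rintro _ ⟨j, rfl⟩
    exact h j j.2
  show (t (iterNode t [] k)).getD k 0 = _
  rw [hspine, spineChoice]

namespace game17

-- With `x, y, z, t = 0, 1, 2, 3`, stopping at `0ᵏ` yields the successor of its owner `k mod 3`.
theorem v_eq_of_first_one {p : ℕ → Fin 2} {k : ℕ} (h0 : ∀ j < k, p j = 0) (h1 : p k = 1) :
    game17.v p = (k : Fin 3).succ := by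
  have hex : ∃ n, p n ≠ 0 := ⟨k, by simp [h1]⟩
  have hfind : Nat.find hex = k :=
    (Nat.find_eq_iff hex).mpr ⟨by simp [h1], fun j hj => by simp [h0 j hj]⟩
  simp only [game17, dif_pos hex, hfind]
  ext
  simp only [Fin.val_succ, Fin.val_natCast]
  omega

theorem v_eq_zero {p : ℕ → Fin 2} (h : ∀ k, p k = 0) : game17.v p = 0 := by
  simp [game17, h]

theorem v_congr {p q : ℕ → Fin 2} (h : ∀ k, (∀ j < k, p j = 0) → p k = q k) :
    game17.v p = game17.v q := by
  by_cases hp : ∃ k, p k ≠ 0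
  · have hbefore : ∀ j < Nat.find hp, p j = 0 := fun j hj => by simpa using Nat.find_min hp hj
    have hfirst : p (Nat.find hp) = 1 := Fin.eq_one_of_ne_zero _ (Nat.find_spec hp)
    rw [v_eq_of_first_one hbefore hfirst, v_eq_of_first_one (p := q)]
    · intro j hj
      rw [← h j fun i hi => hbefore i (hi.trans hj), hbefore j hj]
    · rw [← h _ hbefore, hfirst]
  · simp only [not_exists, not_not] at hp
    have hq : ∀ k, q k = 0 := fun k => by rw [← h k fun j _ => hp j, hp k]
    rw [v_eq_zero hp, v_eq_zero hq]

end game17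

/-- The outcome of `game17` when play follows the spine from `0ⁿ` and stops at the first
`k ≥ n` with `τ k = 1`. -/
noncomputable def spineOutcome (τ : ℕ → Fin 2) (n : ℕ) : Fin 4 :=
  game17.v fun k => if n ≤ k then τ k else 0

theorem spineOutcome_congr {τ τ' : ℕ → Fin 2} {n : ℕ} (h : ∀ k, n ≤ k → τ k = τ' k) :
    spineOutcome τ n = spineOutcome τ' n := by
  unfold spineOutcome
  congr 1
  ext1 k
  split_ifs with hk
  exacts [h k hk, rfl]

theorem spineOutcome_of_eq_one {τ : ℕ → Fin 2} {n : ℕ} (h : τ n = 1) :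
    spineOutcome τ n = (n : Fin 3).succ :=
  game17.v_eq_of_first_one (fun j hj => if_neg (by omega)) (by simp [h])

theorem spineOutcome_cases (τ : ℕ → Fin 2) (n : ℕ) :
    (spineOutcome τ n = 0 ∧ ∀ k, n ≤ k → τ k = 0) ∨
      ∃ k, n ≤ k ∧ τ k = 1 ∧ spineOutcome τ n = (k : Fin 3).succ := by
  by_cases hstop : ∃ k, n ≤ k ∧ τ k = 1
  · obtain ⟨hn, h1⟩ := Nat.find_spec hstop
    refine Or.inr ⟨_, hn, h1, game17.v_eq_of_first_one (fun j hj => ?_) (by simp [hn, h1])⟩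
    split_ifs with hnj
    · by_contra hne
      exact Nat.find_min hstop hj ⟨hnj, Fin.eq_one_of_ne_zero _ hne⟩
    · rfl
  · simp only [not_exists, not_and] at hstop
    have hzero : ∀ k, n ≤ k → τ k = 0 := fun k hk => by
      by_contra hne
      exact hstop k hk (Fin.eq_one_of_ne_zero _ hne)
    exact Or.inl ⟨game17.v_eq_zero fun k => by split_ifs with hk; exacts [hzero k hk, rfl], hzero⟩

theorem game17.sub_v_inducedPlay (n : ℕ) {t : List (Fin 2) → List (Fin 2)}
    (ht : IsProfile Set.univ t) :
    (game17.sub (List.replicate n 0)).v (inducedPlay t) =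
      spineOutcome (fun k => spineChoice t (k - n)) n := by
  refine game17.v_congr fun k hk => ?_
  rw [listExtend_replicate]
  by_cases hkn : k < n
  · simp [hkn]
  · rw [if_neg hkn, if_pos (not_lt.mp hkn)]
    refine inducedPlay_eq_spineChoice ht fun j hj => ?_
    simpa [listExtend_replicate] using hk (n + j) (by omega)

theorem game17.subOutcome_replicate (n : ℕ) {s : List (Fin 2) → List (Fin 2)}
    (hs : IsProfile Set.univ s) :
    subOutcome game17 s (List.replicate n 0) = spineOutcome (spineChoice s) n := by
  rw [subOutcome, game17.sub_v_inducedPlay n (hs.subProfile_univ _)]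
  refine spineOutcome_congr fun k hk => ?_
  rw [spineChoice_subProfile, Nat.add_sub_cancel' hk]

theorem game17.sub_d_replicate (n : ℕ) (δ : List (Fin 2)) (h : ∀ b ∈ δ, b = 0) :
    (game17.sub (List.replicate n 0)).d δ = ((n + δ.length : ℕ) : Fin 3) := by
  have hzero : ∀ b ∈ List.replicate n 0 ++ δ, b = 0 := by
    simpa [or_imp, forall_and] using fun b hb => h b hb
  simp only [Game.sub, game17]
  rw [if_pos hzero]
  simp

/-- In the subgame at `0ⁿ`, the owner `n mod 3` plays `c` at all its spine nodes, and the
profile `s` is followed everywhere else. -/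
def ownSpineDeviation (s : List (Fin 2) → List (Fin 2)) (n : ℕ) (c : Fin 2) :
    List (Fin 2) → List (Fin 2) := fun δ =>
  if (∀ b ∈ δ, b = 0) ∧ ((n + δ.length : ℕ) : Fin 3) = n then δ ++ [c]
  else subProfile (List.replicate n 0) s δ

section Deviation

variable {s : List (Fin 2) → List (Fin 2)}

theorem isProfile_ownSpineDeviation (hs : IsProfile Set.univ s) (n : ℕ) (c : Fin 2) :
    IsProfile Set.univ (ownSpineDeviation s n c) := by
  rw [isProfile_univ_iff]
  intro δ
  unfold ownSpineDeviation
  split_ifs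
  · exact ⟨c, rfl⟩
  · exact isProfile_univ_iff.mp (hs.subProfile_univ _) δ

theorem spineChoice_ownSpineDeviation (n : ℕ) (c : Fin 2) (j : ℕ) :
    spineChoice (ownSpineDeviation s n c) j =
      if ((n + j : ℕ) : Fin 3) = n then c else spineChoice s (n + j) := by
  by_cases hown : ((n + j : ℕ) : Fin 3) = n
  · simp [spineChoice, ownSpineDeviation, hown]
  · simp only [spineChoice, ownSpineDeviation, List.length_replicate, hown, and_false,
      if_false]
    exact spineChoice_subProfile s n j

theorem eq_of_ne_ownSpineDeviation {n : ℕ} {c : Fin 2} {δ : List (Fin 2)}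
    (h : subProfile (List.replicate n 0) s δ ≠ ownSpineDeviation s n c δ) :
    (game17.sub (List.replicate n 0)).d δ = n := by
  unfold ownSpineDeviation at h
  split_ifs at h with hown
  · rw [game17.sub_d_replicate n δ hown.1, hown.2]
  · exact absurd rfl h

end Deviation

/-- No owner of a spine node `0ⁿ` gains in the subgame at `0ⁿ` by making the same choice `c` at
all its spine nodes from `n` on. -/
def IsSpineStable (σ : ℕ → Fin 2) : Prop :=
  ∀ (n : ℕ) (c : Fin 2), ¬ rank17 n (spineOutcome σ n) <
    rank17 n (spineOutcome (fun k => if (k : Fin 3) = n then c else σ k) n)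

theorem isSpineStable_spineChoice {s : List (Fin 2) → List (Fin 2)}
    (hs : IsProfile game17.T s) (hspe : IsSPE game17 s) : IsSpineStable (spineChoice s) := by
  intro n c hlt
  refine hspe (List.replicate n 0) trivial ⟨n, ownSpineDeviation s n c,
    isProfile_ownSpineDeviation hs n c, fun δ _ => eq_of_ne_ownSpineDeviation, ?_⟩
  show rank17 n (subOutcome game17 s _) <
    rank17 n ((game17.sub (List.replicate n 0)).v (inducedPlay (ownSpineDeviation s n c)))
  have hdev : spineOutcome (fun k => spineChoice (ownSpineDeviation s n c) (k - n)) n =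
      spineOutcome (fun k => if (k : Fin 3) = n then c else spineChoice s k) n :=
    spineOutcome_congr fun k hk => by
      rw [spineChoice_ownSpineDeviation, Nat.add_sub_cancel' hk]
  rwa [game17.subOutcome_replicate n hs,
    game17.sub_v_inducedPlay n (isProfile_ownSpineDeviation hs n c), hdev]

theorem Fin.exists_le_natCast_eq {m : ℕ} [NeZero m] (n : ℕ) (i : Fin m) :
    ∃ k, n ≤ k ∧ (k : Fin m) = i :=
  ⟨m * n + i, le_add_right (Nat.le_mul_of_pos_left n (NeZero.pos m)), by
    ext; rw [Fin.val_natCast, Nat.mul_add_mod, Nat.mod_eq_of_lt i.2]⟩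

theorem rank17_succ_self (i : Fin 3) : rank17 i i.succ = 1 := by
  revert i
  decide

namespace IsSpineStable

variable {σ : ℕ → Fin 2} (hσ : IsSpineStable σ)
include hσ

theorem one_le_rank (n : ℕ) : 1 ≤ rank17 n (spineOutcome σ n) := by
  have hstop := hσ n 1
  have hdev : spineOutcome (fun k => if (k : Fin 3) = n then 1 else σ k) n = (n : Fin 3).succ :=
    spineOutcome_of_eq_one (if_pos rfl)
  rw [hdev, rank17_succ_self] at hstop
  omega

theorem rank_continue_le_one {m : ℕ} (hm : σ m = 1) :
    rank17 m (spineOutcome (fun k => if (k : Fin 3) = m then 0 else σ k) m) ≤ 1 := by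
  have hcont := hσ m 0
  rw [spineOutcome_of_eq_one hm, rank17_succ_self] at hcont
  omega

theorem exists_stop_ge (n : ℕ) : ∃ k, n ≤ k ∧ σ k = 1 := by
  obtain ⟨n', hnn', hc⟩ := Fin.exists_le_natCast_eq n (2 : Fin 3)
  rcases spineOutcome_cases σ n' with ⟨hx, -⟩ | ⟨k, hk, hstop, -⟩
  · have := hσ.one_le_rank n'
    rw [hx, hc] at this
    exact absurd this (by decide)
  · exact ⟨k, hnn'.trans hk, hstop⟩

-- If only `i` stops from `m` on, the outcome at any later node of `j` is `i.succ`.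
theorem natCast_ne_of_stop {i j : Fin 3}
    (hi : ∀ k, σ k = 1 → (k : Fin 3) ≠ i → 1 < rank17 i (k : Fin 3).succ)
    (hj : rank17 j i.succ = 0) {m : ℕ} (hm : σ m = 1) : (m : Fin 3) ≠ i := by
  intro hmi
  have hcont := hσ.rank_continue_le_one hm
  rcases spineOutcome_cases (fun k => if (k : Fin 3) = m then 0 else σ k) m with
    ⟨-, hnone⟩ | ⟨k, -, hk, hG⟩
  · obtain ⟨n, hmn, hn⟩ := Fin.exists_le_natCast_eq m j
    obtain ⟨k, hnk, hk, hF⟩ := (spineOutcome_cases σ n).resolve_left fun hnone' => by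
      obtain ⟨k', hnk', hk'⟩ := hσ.exists_stop_ge n
      simp [hnone'.2 k' hnk'] at hk'
    have hki : (k : Fin 3) = i := by
      by_contra hki
      have := hnone k (hmn.trans hnk)
      rw [if_neg (hmi ▸ hki), hk] at this
      exact absurd this (by decide)
    have := hσ.one_le_rank n
    rw [hF, hn, hki, hj] at this
    exact absurd this (by decide)
  · by_cases hkm : (k : Fin 3) = m
    · simp [hkm] at hk
    rw [if_neg hkm] at hk
    rw [hG, hmi] at hcont
    exact absurd (hi k hk (hmi ▸ hkm)) (not_lt.mpr hcont)

theorem natCast_ne_two_of_stop {m : ℕ} (hm : σ m = 1) : (m : Fin 3) ≠ 2 :=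
  hσ.natCast_ne_of_stop (j := 1)
    (fun k _ => by generalize (k : Fin 3) = r; revert r; decide) (by decide) hm

theorem natCast_ne_one_of_stop {m : ℕ} (hm : σ m = 1) : (m : Fin 3) ≠ 1 :=
  hσ.natCast_ne_of_stop (j := 0)
    (fun k hk => by
      have := hσ.natCast_ne_two_of_stop hk
      generalize (k : Fin 3) = r at this ⊢; revert r; decide)
    (by decide) hm

theorem natCast_ne_zero_of_stop {m : ℕ} (hm : σ m = 1) : (m : Fin 3) ≠ 0 := by
  intro hm0
  have hcont := hσ.rank_continue_le_one hm
  rcases spineOutcome_cases (fun k => if (k : Fin 3) = m then 0 else σ k) m with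
    ⟨hx, -⟩ | ⟨k, -, hk, -⟩
  · rw [hx, hm0] at hcont
    exact absurd hcont (by decide)
  · by_cases hkm : (k : Fin 3) = m
    · simp [hkm] at hk
    rw [if_neg hkm] at hk
    have h1 := hσ.natCast_ne_one_of_stop hk
    have h2 := hσ.natCast_ne_two_of_stop hk
    rw [hm0] at hkm
    generalize (k : Fin 3) = r at h1 h2 hkm
    revert r; decide

end IsSpineStable

theorem not_isSpineStable (σ : ℕ → Fin 2) : ¬ IsSpineStable σ := by
  intro hσ
  obtain ⟨k, -, hk⟩ := hσ.exists_stop_ge 0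
  have h0 := hσ.natCast_ne_zero_of_stop hk
  have h1 := hσ.natCast_ne_one_of_stop hk
  have h2 := hσ.natCast_ne_two_of_stop hk
  generalize (k : Fin 3) = r at h0 h1 h2
  revert r; decide

/-- the above three-player game has no subgame perfect equilibrium. -/
theorem stmt17 : ¬ ∃ s, IsProfile game17.T s ∧ IsSPE game17 s := by
  rintro ⟨s, hs, hspe⟩
  exact not_isSpineStable _ (isSpineStable_spineChoice hs hspe)
end

section
/- Let O = {x, y, z, α, β, γ}, let ≺_a be the strict partial order on O generated by γ ≺_a y ≺_a x and z ≺_a β ≺_a α (two disjoint three-element chains), and let ≺_b be the strict partial order on O generated by x ≺_b z ≺_b y and α ≺_b γ ≺_b β. Then for every strict weak order ≺'_a on O extending ≺_a, the SPE killer occurs in the pair (≺'_a, ≺_b): there exist u, v, w ∈ O with w ≺'_a v ≺'_a u and u ≺_b w ≺_b v. Consequently, the SPE killer occurs in every pair of strict weak orders extending ≺_a and ≺_b respectively. -/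
/-- The strict partial order on `O = {x, y, z, α, β, γ} = {0, 1, 2, 3, 4, 5}` generated by
`γ ≺_a y ≺_a x` and `z ≺_a β ≺_a α`. -/
def Ra18 : Fin 6 → Fin 6 → Prop := fun u v =>
  (u = 5 ∧ v = 1) ∨ (u = 1 ∧ v = 0) ∨ (u = 5 ∧ v = 0) ∨
  (u = 2 ∧ v = 4) ∨ (u = 4 ∧ v = 3) ∨ (u = 2 ∧ v = 3)

/-- The strict partial order on `O = {x, y, z, α, β, γ} = {0, 1, 2, 3, 4, 5}` generated by
`x ≺_b z ≺_b y` and `α ≺_b γ ≺_b β`. -/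
def Rb18 : Fin 6 → Fin 6 → Prop := fun u v =>
  (u = 0 ∧ v = 2) ∨ (u = 2 ∧ v = 1) ∨ (u = 0 ∧ v = 1) ∨
  (u = 3 ∧ v = 5) ∨ (u = 5 ∧ v = 4) ∨ (u = 3 ∧ v = 4)

/-- every strict weak order extending `≺_a` forms with `≺_b` an
occurrence of the SPE killer; consequently, the SPE killer occurs in every pair of
strict weak orders extending `≺_a` and `≺_b` respectively. -/
theorem stmt18 :
    (∀ lta : Fin 6 → Fin 6 → Prop, IsSWO lta → (∀ u v, Ra18 u v → lta u v) →
      ∃ u v w, lta w v ∧ lta v u ∧ Rb18 u w ∧ Rb18 w v) ∧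
    (∀ lta ltb : Fin 6 → Fin 6 → Prop, IsSWO lta → IsSWO ltb →
      (∀ u v, Ra18 u v → lta u v) → (∀ u v, Rb18 u v → ltb u v) →
      ∃ u v w, lta w v ∧ lta v u ∧ ltb u w ∧ ltb w v) := by
  have main : ∀ lta : Fin 6 → Fin 6 → Prop, IsSWO lta → (∀ u v, Ra18 u v → lta u v) →
      ∃ u v w, lta w v ∧ lta v u ∧ Rb18 u w ∧ Rb18 w v := by
    intro lta hswo hext
    obtain ⟨hirr, htr, hctr⟩ := hswo
    have h51 : lta 5 1 := hext 5 1 (by left; exact ⟨rfl, rfl⟩)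
    have h10 : lta 1 0 := hext 1 0 (by right; left; exact ⟨rfl, rfl⟩)
    have h24 : lta 2 4 := hext 2 4 (by right; right; right; left; exact ⟨rfl, rfl⟩)
    have h43 : lta 4 3 := hext 4 3 (by right; right; right; right; left; exact ⟨rfl, rfl⟩)
    by_cases h21 : lta 2 1
    · exact ⟨0, 1, 2, h21, h10, Or.inl ⟨rfl, rfl⟩, Or.inr (Or.inl ⟨rfl, rfl⟩)⟩
    · have h41 : ¬ lta 4 1 := fun h => h21 (htr 2 4 1 h24 h)
      have h54 : lta 5 4 := by
        by_contra h54
        exact (hctr 5 4 1 h54 h41) h51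
      exact ⟨3, 4, 5, h54, h43,
        Or.inr (Or.inr (Or.inr (Or.inl ⟨rfl, rfl⟩))),
        Or.inr (Or.inr (Or.inr (Or.inr (Or.inl ⟨rfl, rfl⟩))))⟩
  refine ⟨main, ?_⟩
  intro lta ltb ha hb hea heb
  obtain ⟨u, v, w, h1, h2, h3, h4⟩ := main lta ha hea
  exact ⟨u, v, w, h1, h2, heb u w h3, heb w v h4⟩
end
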